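/- arXiv:2112.13495 — 3 statements merged into one kernel-verified Lean document; each statement's English description precedes it below -/
import Mathlib

section
/- Under a simple multiple randomization design (independent uniformly random size-I_T buyer subset and size-J_T seller subset, with treated cells those where both buyer and seller are selected, and types c, ib, is, t defined accordingly), the sample average of Y_{ij}(ω) over cells of type ω is an unbiased estimator of the population average Ȳ̄(ω) = (1/(IJ)) Σ_{i,j} Y_{ij}(ω), for each type ω ∈ {c, ib, is, t}. -/
open Finset

/-- The four assignment types of a simple multiple randomization design. -/
inductive MType : Type
  | c | ib | is | t
  deriving DecidableEq

/-- Indicator that cell `(i,j)` has type `ω` given selected buyers `s` and sellers `u`. -/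
def typeInd {I J : ℕ} (ω : MType) (s : Finset (Fin I)) (u : Finset (Fin J))
    (i : Fin I) (j : Fin J) : ℝ :=
  match ω with
  | MType.t  => if i ∈ s ∧ j ∈ u then 1 else 0
  | MType.ib => if i ∈ s ∧ j ∉ u then 1 else 0
  | MType.is => if i ∉ s ∧ j ∈ u then 1 else 0
  | MType.c  => if i ∉ s ∧ j ∉ u then 1 else 0

/-- The (nonrandom) number of cells of type `ω`. -/
def Ncells (I J IT JT : ℕ) (ω : MType) : ℕ :=
  match ω with
  | MType.t  => IT * JT
  | MType.ib => IT * (J - JT)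
  | MType.is => (I - IT) * JT
  | MType.c  => (I - IT) * (J - JT)

/-- Expectation under two independent uniform fixed-size random subsets. -/
noncomputable def srsExp2 (I J IT JT : ℕ)
    (f : Finset (Fin I) → Finset (Fin J) → ℝ) : ℝ :=
  (∑ s ∈ Finset.powersetCard IT (Finset.univ : Finset (Fin I)),
     ∑ u ∈ Finset.powersetCard JT (Finset.univ : Finset (Fin J)), f s u) /
    (((Finset.powersetCard IT (Finset.univ : Finset (Fin I))).card : ℝ) *
     ((Finset.powersetCard JT (Finset.univ : Finset (Fin J))).card : ℝ))

lemma filter_not_mem_powersetCard {n k : ℕ} (i : Fin n) :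
    (Finset.powersetCard k (Finset.univ : Finset (Fin n))).filter (fun s => i ∉ s)
      = Finset.powersetCard k (Finset.univ.erase i) := by
  ext s
  simp [Finset.mem_powersetCard, Finset.subset_erase, and_comm, and_assoc]

lemma card_filter_notMem {n k : ℕ} (i : Fin n) :
    ((Finset.powersetCard k (Finset.univ : Finset (Fin n))).filter (fun s => i ∉ s)).card
      = (n-1).choose k := by
  rw [filter_not_mem_powersetCard, Finset.card_powersetCard,
    Finset.card_erase_of_mem (Finset.mem_univ i), Finset.card_univ, Fintype.card_fin]

lemma card_filter_mem {n k : ℕ} (i : Fin n) :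
    (((Finset.powersetCard k (Finset.univ : Finset (Fin n))).filter (fun s => i ∈ s)).card : ℝ)
      = (n.choose k : ℝ) - ((n-1).choose k : ℝ) := by
  have h := Finset.card_filter_add_card_filter_not
    (s := Finset.powersetCard k (Finset.univ : Finset (Fin n))) (fun s => i ∈ s)
  rw [Finset.card_powersetCard, Finset.card_univ, Fintype.card_fin] at h
  have h2 := card_filter_notMem (k := k) i
  have h3 : ((Finset.powersetCard k (Finset.univ : Finset (Fin n))).filter
      (fun s => i ∈ s)).card + (n-1).choose k = n.choose k := by
    rw [← h2]; exact h
  have := congrArg (Nat.cast (R := ℝ)) h3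
  push_cast at this
  linarith

lemma sum_ite_mem (n k : ℕ) (i : Fin n) :
    ∑ s ∈ Finset.powersetCard k (Finset.univ : Finset (Fin n)), (if i ∈ s then (1:ℝ) else 0)
      = (n.choose k : ℝ) - ((n-1).choose k : ℝ) := by
  rw [Finset.sum_boole, card_filter_mem]

lemma sum_ite_not_mem (n k : ℕ) (i : Fin n) :
    ∑ s ∈ Finset.powersetCard k (Finset.univ : Finset (Fin n)), (if i ∉ s then (1:ℝ) else 0)
      = ((n-1).choose k : ℝ) := by
  rw [Finset.sum_boole, card_filter_notMem]

lemma ratio_mem (n k : ℕ) (h1 : 1 ≤ k) (hk : k ≤ n - 1) (h2 : 2 ≤ n) :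
    (n:ℝ) * ((n.choose k : ℝ) - ((n-1).choose k : ℝ)) = (k:ℝ) * (n.choose k : ℝ) := by
  obtain ⟨m, rfl⟩ : ∃ m, n = m + 1 := ⟨n - 1, by omega⟩
  obtain ⟨l, rfl⟩ : ∃ l, k = l + 1 := ⟨k - 1, by omega⟩
  have hs := Nat.add_one_mul_choose_eq m l
  have hp := Nat.choose_succ_succ' m l
  have hs' := congrArg (Nat.cast (R := ℝ)) hs
  have hp' := congrArg (Nat.cast (R := ℝ)) hp
  push_cast at hs' hp' ⊢
  nlinarith [hs', hp']

lemma ratio_notMem (n k : ℕ) (h1 : 1 ≤ k) (hk : k ≤ n - 1) (h2 : 2 ≤ n) :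
    (n:ℝ) * (((n-1).choose k : ℝ)) = ((n - k : ℕ):ℝ) * (n.choose k : ℝ) := by
  have h := ratio_mem n k h1 hk h2
  have hkn : k ≤ n := by omega
  push_cast [Nat.cast_sub hkn] at h ⊢
  nlinarith [h]

lemma main_calc {I J IT JT : ℕ}
    (p : Fin I → Finset (Fin I) → Prop) [∀ i s, Decidable (p i s)]
    (q : Fin J → Finset (Fin J) → Prop) [∀ j u, Decidable (q j u)]
    (A B : ℝ)
    (hA : ∀ i, ∑ s ∈ Finset.powersetCard IT (Finset.univ : Finset (Fin I)),
        (if p i s then (1:ℝ) else 0) = A)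
    (hB : ∀ j, ∑ u ∈ Finset.powersetCard JT (Finset.univ : Finset (Fin J)),
        (if q j u then (1:ℝ) else 0) = B)
    (Y : Fin I → Fin J → ℝ) :
    ∑ s ∈ Finset.powersetCard IT (Finset.univ : Finset (Fin I)),
      ∑ u ∈ Finset.powersetCard JT (Finset.univ : Finset (Fin J)),
        (∑ i, ∑ j, (if p i s ∧ q j u then (1:ℝ) else 0) * Y i j)
      = A * B * ∑ i, ∑ j, Y i j := by
  have hsplit : ∀ (s : Finset (Fin I)) (u : Finset (Fin J)) i j,
      (if p i s ∧ q j u then (1:ℝ) else 0)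
        = (if p i s then (1:ℝ) else 0) * (if q j u then (1:ℝ) else 0) := by
    intro s u i j
    by_cases h1 : p i s <;> by_cases h2 : q j u <;> simp [h1, h2]
  have step : ∀ s, ∑ u ∈ Finset.powersetCard JT (Finset.univ : Finset (Fin J)),
      (∑ i, ∑ j, (if p i s ∧ q j u then (1:ℝ) else 0) * Y i j)
      = ∑ i, ∑ j, (if p i s then (1:ℝ) else 0) * B * Y i j := by
    intro s
    rw [Finset.sum_comm]
    refine Finset.sum_congr rfl fun i _ => ?_
    rw [Finset.sum_comm]
    refine Finset.sum_congr rfl fun j _ => ?_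
    calc ∑ u ∈ Finset.powersetCard JT (Finset.univ : Finset (Fin J)),
          (if p i s ∧ q j u then (1:ℝ) else 0) * Y i j
        = (∑ u ∈ Finset.powersetCard JT (Finset.univ : Finset (Fin J)),
            (if q j u then (1:ℝ) else 0)) * ((if p i s then (1:ℝ) else 0) * Y i j) := by
          rw [Finset.sum_mul]
          exact Finset.sum_congr rfl fun u _ => by rw [hsplit]; ring
      _ = (if p i s then (1:ℝ) else 0) * B * Y i j := by rw [hB j]; ring
  calc ∑ s ∈ Finset.powersetCard IT (Finset.univ : Finset (Fin I)),
      ∑ u ∈ Finset.powersetCard JT (Finset.univ : Finset (Fin J)),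
        (∑ i, ∑ j, (if p i s ∧ q j u then (1:ℝ) else 0) * Y i j)
      = ∑ s ∈ Finset.powersetCard IT (Finset.univ : Finset (Fin I)),
          ∑ i, ∑ j, (if p i s then (1:ℝ) else 0) * B * Y i j :=
        Finset.sum_congr rfl fun s _ => step s
    _ = ∑ i, ∑ s ∈ Finset.powersetCard IT (Finset.univ : Finset (Fin I)),
          ∑ j, (if p i s then (1:ℝ) else 0) * B * Y i j := Finset.sum_comm
    _ = ∑ i, ∑ j, A * B * Y i j := by
        refine Finset.sum_congr rfl fun i _ => ?_
        rw [Finset.sum_comm]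
        refine Finset.sum_congr rfl fun j _ => ?_
        calc ∑ s ∈ Finset.powersetCard IT (Finset.univ : Finset (Fin I)),
            (if p i s then (1:ℝ) else 0) * B * Y i j
            = (∑ s ∈ Finset.powersetCard IT (Finset.univ : Finset (Fin I)),
                (if p i s then (1:ℝ) else 0)) * (B * Y i j) := by
              rw [Finset.sum_mul]
              exact Finset.sum_congr rfl fun s _ => by ring
          _ = A * B * Y i j := by rw [hA i]; ring
    _ = A * B * ∑ i, ∑ j, Y i j := by
        rw [Finset.mul_sum]
        exact Finset.sum_congr rfl fun i _ => by rw [Finset.mul_sum]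

lemma final_arith (S A B cI cJ : ℝ) (I J aI aJ : ℕ)
    (hI : 0 < I) (hJ : 0 < J) (haI : 0 < aI) (haJ : 0 < aJ)
    (hcI : cI ≠ 0) (hcJ : cJ ≠ 0)
    (hA : (I:ℝ) * A = (aI:ℝ) * cI) (hB : (J:ℝ) * B = (aJ:ℝ) * cJ) :
    (A * B * S / ((aI * aJ : ℕ):ℝ)) / (cI * cJ) = S / ((I : ℝ) * J) := by
  have hI' : (I:ℝ) ≠ 0 := Nat.cast_ne_zero.mpr hI.ne'
  have hJ' : (J:ℝ) ≠ 0 := Nat.cast_ne_zero.mpr hJ.ne'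
  have haI' : (aI:ℝ) ≠ 0 := Nat.cast_ne_zero.mpr haI.ne'
  have haJ' : (aJ:ℝ) ≠ 0 := Nat.cast_ne_zero.mpr haJ.ne'
  push_cast
  field_simp
  linear_combination (S * B * (J:ℝ)) * hA + (S * (aI:ℝ) * cI) * hB

/-- under a SMRD with local interference, the sample average of `Y(ω)` over
cells of type `ω` is unbiased for the population average `Ȳ̄(ω)`. -/
theorem smrd_sample_average_unbiased (I J IT JT : ℕ)
    (hI : 2 ≤ I) (hJ : 2 ≤ J)
    (hIT1 : 1 ≤ IT) (hIT2 : IT ≤ I - 1) (hJT1 : 1 ≤ JT) (hJT2 : JT ≤ J - 1)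
    (Y : MType → Fin I → Fin J → ℝ) :
    ∀ ω : MType,
      srsExp2 I J IT JT (fun s u =>
          (∑ i, ∑ j, typeInd ω s u i j * Y ω i j) / ((Ncells I J IT JT ω : ℝ)))
        = (∑ i, ∑ j, Y ω i j) / ((I : ℝ) * J) := by
  intro ω
  have hI0 : 0 < I := by omega
  have hJ0 : 0 < J := by omega
  have hITI : IT ≤ I := by omega
  have hJTJ : JT ≤ J := by omega
  have hcI : ((Finset.powersetCard IT (Finset.univ : Finset (Fin I))).card : ℝ)
      = (I.choose IT : ℝ) := by
    rw [Finset.card_powersetCard, Finset.card_univ, Fintype.card_fin]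
  have hcJ : ((Finset.powersetCard JT (Finset.univ : Finset (Fin J))).card : ℝ)
      = (J.choose JT : ℝ) := by
    rw [Finset.card_powersetCard, Finset.card_univ, Fintype.card_fin]
  have hcI0 : (I.choose IT : ℝ) ≠ 0 := Nat.cast_ne_zero.mpr (Nat.choose_pos hITI).ne'
  have hcJ0 : (J.choose JT : ℝ) ≠ 0 := Nat.cast_ne_zero.mpr (Nat.choose_pos hJTJ).ne'
  cases ω with
  | t =>
      unfold srsExp2
      simp only [typeInd, Ncells, ← Finset.sum_div]
      rw [main_calc (fun i s => i ∈ s) (fun j u => j ∈ u) _ _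
        (fun i => sum_ite_mem I IT i) (fun j => sum_ite_mem J JT j) (Y MType.t),
        hcI, hcJ]
      exact final_arith _ _ _ _ _ I J IT JT hI0 hJ0 (by omega) (by omega) hcI0 hcJ0
        (ratio_mem I IT hIT1 hIT2 hI) (ratio_mem J JT hJT1 hJT2 hJ)
  | ib =>
      unfold srsExp2
      simp only [typeInd, Ncells, ← Finset.sum_div]
      rw [main_calc (fun i s => i ∈ s) (fun j u => j ∉ u) _ _
        (fun i => sum_ite_mem I IT i) (fun j => sum_ite_not_mem J JT j) (Y MType.ib),
        hcI, hcJ]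
      exact final_arith _ _ _ _ _ I J IT (J - JT) hI0 hJ0 (by omega) (by omega) hcI0 hcJ0
        (ratio_mem I IT hIT1 hIT2 hI) (ratio_notMem J JT hJT1 hJT2 hJ)
  | is =>
      unfold srsExp2
      simp only [typeInd, Ncells, ← Finset.sum_div]
      rw [main_calc (fun i s => i ∉ s) (fun j u => j ∈ u) _ _
        (fun i => sum_ite_not_mem I IT i) (fun j => sum_ite_mem J JT j) (Y MType.is),
        hcI, hcJ]
      exact final_arith _ _ _ _ _ I J (I - IT) JT hI0 hJ0 (by omega) (by omega) hcI0 hcJ0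
        (ratio_notMem I IT hIT1 hIT2 hI) (ratio_mem J JT hJT1 hJT2 hJ)
  | c =>
      unfold srsExp2
      simp only [typeInd, Ncells, ← Finset.sum_div]
      rw [main_calc (fun i s => i ∉ s) (fun j u => j ∉ u) _ _
        (fun i => sum_ite_not_mem I IT i) (fun j => sum_ite_not_mem J JT j) (Y MType.c),
        hcI, hcJ]
      exact final_arith _ _ _ _ _ I J (I - IT) (J - JT) hI0 hJ0 (by omega) (by omega) hcI0 hcJ0
        (ratio_notMem I IT hIT1 hIT2 hI) (ratio_notMem J JT hJT1 hJT2 hJ)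
end

section
/- Under a simple multiple randomization design with local interference, the difference-in-means estimator τ̂ = Ȳ̄_t − Ȳ̄_c is an unbiased estimator of τ(p^B, p^S) = Ȳ̄(t) − Ȳ̄(c), and similarly the difference-in-differences estimator τ̂_direct = Ȳ̄_t − Ȳ̄_ib − Ȳ̄_is + Ȳ̄_c is unbiased for τ_direct = Ȳ̄(t) − Ȳ̄(ib) − Ȳ̄(is) + Ȳ̄(c). -/
open Finset

/-- Sample average of `Y(ω)` over cells of type `ω`. -/
noncomputable def sampleAvg (I J IT JT : ℕ) (Y : MType → Fin I → Fin J → ℝ) (ω : MType)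
    (s : Finset (Fin I)) (u : Finset (Fin J)) : ℝ :=
  (∑ i, ∑ j, typeInd ω s u i j * Y ω i j) / ((Ncells I J IT JT ω : ℝ))

/-- Population average `Ȳ̄(ω)`. -/
noncomputable def popAvg (I J : ℕ) (Y : MType → Fin I → Fin J → ℝ) (ω : MType) : ℝ :=
  (∑ i, ∑ j, Y ω i j) / ((I : ℝ) * J)

/-! The type indicator of a cell is a product of a buyer factor and a seller factor, which are
independent under the design. A fixed unit lies in a uniform `k`-subset of `n` units with
probability `k / n` and outside it with probability `(n - k) / n`, so every cell has type `ω`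
with the same probability `N_ω / (I J)`. Hence each sample average `Ȳ̄_ω` is unbiased for
`Ȳ̄(ω)`, and both estimators are linear combinations of these. -/

section UniformSubset

variable {α : Type*} [Fintype α] [DecidableEq α]

theorem card_mul_card_filter_mem_powersetCard_univ (k : ℕ) (a : α) :
    Fintype.card α * #{s ∈ powersetCard k (univ : Finset α) | a ∈ s} =
      k * (Fintype.card α).choose k := by
  cases k with
  | zero => simp
  | succ k =>
    obtain ⟨n, hn⟩ := Nat.exists_eq_add_one.mpr (Fintype.card_pos_iff.mpr ⟨a⟩)
    have h := card_filter_powersetCard_subset {a} univ (k + 1) (subset_univ _) (by simp)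
    simp only [singleton_subset_iff, card_singleton, card_univ, hn] at h
    rw [h, hn, Nat.add_sub_cancel, Nat.add_sub_cancel, Nat.add_one_mul_choose_eq, mul_comm]

theorem card_filter_mem_iff_powersetCard_univ_div_choose {k : ℕ} (hk : k ≤ Fintype.card α)
    (a : α) (p : Prop) [Decidable p] :
    (#{s ∈ powersetCard k (univ : Finset α) | (a ∈ s ↔ p)} : ℝ) / (Fintype.card α).choose k =
      ((if p then k else Fintype.card α - k : ℕ) : ℝ) / Fintype.card α := by
  have hn : (Fintype.card α : ℝ) ≠ 0 := by exact_mod_cast (Fintype.card_pos_iff.mpr ⟨a⟩).ne'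
  have hC : ((Fintype.card α).choose k : ℝ) ≠ 0 := by exact_mod_cast (Nat.choose_pos hk).ne'
  have hmem : (Fintype.card α : ℝ) * #{s ∈ powersetCard k (univ : Finset α) | a ∈ s} =
      k * (Fintype.card α).choose k := by
    exact_mod_cast card_mul_card_filter_mem_powersetCard_univ k a
  rw [div_eq_div_iff hC hn]
  by_cases hp : p
  · simp only [hp, iff_true, if_true]
    linear_combination hmem
  · have hsplit : (#{s ∈ powersetCard k (univ : Finset α) | a ∈ s} : ℝ) +
        #{s ∈ powersetCard k (univ : Finset α) | a ∉ s} = (Fintype.card α).choose k := by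
      rw [← card_univ, ← card_powersetCard]
      exact_mod_cast card_filter_add_card_filter_not (s := powersetCard k univ) (a ∈ ·)
    simp only [hp, iff_false, if_false, Nat.cast_sub hk]
    linear_combination (Fintype.card α : ℝ) * hsplit - hmem

end UniformSubset


def MType.buyerTreated : MType → Bool
  | .t | .ib => true
  | .is | .c => false

def MType.sellerTreated : MType → Bool
  | .t | .is => true
  | .ib | .c => false

theorem typeInd_eq_mul {I J : ℕ} (ω : MType) (s : Finset (Fin I)) (u : Finset (Fin J))
    (i : Fin I) (j : Fin J) :
    typeInd ω s u i j =
      (if (i ∈ s ↔ ω.buyerTreated) then 1 else 0) * (if (j ∈ u ↔ ω.sellerTreated) then 1 else 0) := by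
  cases ω <;> by_cases hi : i ∈ s <;> by_cases hj : j ∈ u <;>
    simp [typeInd, MType.buyerTreated, MType.sellerTreated, hi, hj]

theorem Ncells_eq_mul (I J IT JT : ℕ) (ω : MType) :
    Ncells I J IT JT ω =
      (if ω.buyerTreated then IT else I - IT) * (if ω.sellerTreated then JT else J - JT) := by
  cases ω <;> rfl

section Linearity

variable {I J IT JT : ℕ}

theorem srsExp2_add (f g : Finset (Fin I) → Finset (Fin J) → ℝ) :
    srsExp2 I J IT JT (fun s u => f s u + g s u) = srsExp2 I J IT JT f + srsExp2 I J IT JT g := by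
  simp only [srsExp2, sum_add_distrib, add_div]

theorem srsExp2_sub (f g : Finset (Fin I) → Finset (Fin J) → ℝ) :
    srsExp2 I J IT JT (fun s u => f s u - g s u) = srsExp2 I J IT JT f - srsExp2 I J IT JT g := by
  simp only [srsExp2, sum_sub_distrib, sub_div]

theorem srsExp2_sum {ι : Type*} (t : Finset ι) (f : ι → Finset (Fin I) → Finset (Fin J) → ℝ) :
    srsExp2 I J IT JT (fun s u => ∑ x ∈ t, f x s u) = ∑ x ∈ t, srsExp2 I J IT JT (f x) := by
  simp only [srsExp2, ← sum_div]
  exact congrArg (· / _) ((sum_congr rfl fun _ _ => sum_comm).trans sum_comm)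

theorem srsExp2_mul_const (f : Finset (Fin I) → Finset (Fin J) → ℝ) (c : ℝ) :
    srsExp2 I J IT JT (fun s u => f s u * c) = srsExp2 I J IT JT f * c := by
  simp only [srsExp2, ← sum_mul, div_mul_eq_mul_div]

theorem srsExp2_div_const (f : Finset (Fin I) → Finset (Fin J) → ℝ) (c : ℝ) :
    srsExp2 I J IT JT (fun s u => f s u / c) = srsExp2 I J IT JT f / c := by
  simp only [div_eq_mul_inv, srsExp2_mul_const]

theorem srsExp2_mul (g : Finset (Fin I) → ℝ) (h : Finset (Fin J) → ℝ) :
    srsExp2 I J IT JT (fun s u => g s * h u) =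
      (∑ s ∈ powersetCard IT (univ : Finset (Fin I)), g s) /
          #(powersetCard IT (univ : Finset (Fin I))) *
        ((∑ u ∈ powersetCard JT (univ : Finset (Fin J)), h u) /
          #(powersetCard JT (univ : Finset (Fin J)))) := by
  rw [srsExp2, ← sum_mul_sum, mul_div_mul_comm]

end Linearity

theorem srsExp2_typeInd {I J IT JT : ℕ} (hIT : IT ≤ I) (hJT : JT ≤ J) (ω : MType)
    (i : Fin I) (j : Fin J) :
    srsExp2 I J IT JT (fun s u => typeInd ω s u i j) = Ncells I J IT JT ω / ((I : ℝ) * J) := by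
  have hB := card_filter_mem_iff_powersetCard_univ_div_choose (k := IT)
    (by rwa [Fintype.card_fin]) i ω.buyerTreated
  have hS := card_filter_mem_iff_powersetCard_univ_div_choose (k := JT)
    (by rwa [Fintype.card_fin]) j ω.sellerTreated
  simp only [Fintype.card_fin] at hB hS
  simp only [typeInd_eq_mul, srsExp2_mul, sum_boole, card_powersetCard, card_univ,
    Fintype.card_fin, hB, hS, Ncells_eq_mul, Nat.cast_mul]
  ring

theorem srsExp2_sampleAvg {I J IT JT : ℕ} (hIT₀ : 0 < IT) (hIT : IT < I)
    (hJT₀ : 0 < JT) (hJT : JT < J) (Y : MType → Fin I → Fin J → ℝ) (ω : MType) :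
    srsExp2 I J IT JT (fun s u => sampleAvg I J IT JT Y ω s u) = popAvg I J Y ω := by
  have hN : (Ncells I J IT JT ω : ℝ) ≠ 0 := by
    rw [Nat.cast_ne_zero, Ncells_eq_mul]
    apply mul_ne_zero <;> split_ifs <;> omega
  simp only [sampleAvg, srsExp2_div_const, srsExp2_sum, srsExp2_mul_const,
    srsExp2_typeInd hIT.le hJT.le, popAvg, ← mul_sum]
  field_simp

theorem smrd_spillover_estimators_unbiased_general (I J IT JT : ℕ)
    (hIT1 : 1 ≤ IT) (hIT2 : IT ≤ I - 1) (hJT1 : 1 ≤ JT) (hJT2 : JT ≤ J - 1)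
    (Y : MType → Fin I → Fin J → ℝ) :
    (srsExp2 I J IT JT (fun s u =>
        sampleAvg I J IT JT Y MType.t s u - sampleAvg I J IT JT Y MType.c s u)
      = popAvg I J Y MType.t - popAvg I J Y MType.c)
    ∧
    (srsExp2 I J IT JT (fun s u =>
        sampleAvg I J IT JT Y MType.t s u - sampleAvg I J IT JT Y MType.ib s u
          - sampleAvg I J IT JT Y MType.is s u + sampleAvg I J IT JT Y MType.c s u)
      = popAvg I J Y MType.t - popAvg I J Y MType.ib
          - popAvg I J Y MType.is + popAvg I J Y MType.c) := by
  have hE := srsExp2_sampleAvg (by omega) (by omega : IT < I) (by omega) (by omega : JT < J) Y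
  simp only [srsExp2_add, srsExp2_sub, hE, and_self]

/-- the difference-in-means estimator `Ȳ̄_t − Ȳ̄_c` is unbiased for
`Ȳ̄(t) − Ȳ̄(c)`, and the difference-in-differences estimator
`Ȳ̄_t − Ȳ̄_ib − Ȳ̄_is + Ȳ̄_c` is unbiased for `τ_direct`. -/
theorem smrd_spillover_estimators_unbiased (I J IT JT : ℕ)
    (hI : 2 ≤ I) (hJ : 2 ≤ J)
    (hIT1 : 1 ≤ IT) (hIT2 : IT ≤ I - 1) (hJT1 : 1 ≤ JT) (hJT2 : JT ≤ J - 1)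
    (Y : MType → Fin I → Fin J → ℝ) :
    (srsExp2 I J IT JT (fun s u =>
        sampleAvg I J IT JT Y MType.t s u - sampleAvg I J IT JT Y MType.c s u)
      = popAvg I J Y MType.t - popAvg I J Y MType.c)
    ∧
    (srsExp2 I J IT JT (fun s u =>
        sampleAvg I J IT JT Y MType.t s u - sampleAvg I J IT JT Y MType.ib s u
          - sampleAvg I J IT JT Y MType.is s u + sampleAvg I J IT JT Y MType.c s u)
      = popAvg I J Y MType.t - popAvg I J Y MType.ib
          - popAvg I J Y MType.is + popAvg I J Y MType.c) :=
  smrd_spillover_estimators_unbiased_general I J IT JT hIT1 hIT2 hJT1 hJT2 Y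
end

section
/- In a simple multiple randomization design with local interference, the variance of the treated-type sample average is exactly Var(Ȳ̄_t) = (I_C/(I_T I)) S²_t(B) + (J_C/(J_T J)) S²_t(S) + (I_C/(I_T I))(J_C/(J_T J)) S²_t(BS), where S²_t(B) = (1/(I−1))Σ_i (Ẏ^B_i(t))², S²_t(S) = (1/(J−1))Σ_j (Ẏ^S_j(t))², and S²_t(BS) = (1/((I−1)(J−1)))Σ_{i,j}(Ẏ_{ij}(t))². -/
open Finset

/-- Variance under the double randomization. -/
noncomputable def srsVar2 (I J IT JT : ℕ)
    (f : Finset (Fin I) → Finset (Fin J) → ℝ) : ℝ :=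
  srsExp2 I J IT JT (fun s u => (f s u) ^ 2) - (srsExp2 I J IT JT f) ^ 2


lemma card_filter_subset_powersetCard {α : Type*} [DecidableEq α] (s t : Finset α) (k : ℕ)
    (hts : t ⊆ s) (htk : t.card ≤ k) :
    ((powersetCard k s).filter (fun u => t ⊆ u)).card = (s.card - t.card).choose (k - t.card) := by
  rw [← Finset.card_sdiff_of_subset hts, ← Finset.card_powersetCard (k - t.card) (s \ t)]
  apply Finset.card_bij' (fun u _ => u \ t) (fun v _ => v ∪ t)
  · intro u hu
    simp only [mem_filter, mem_powersetCard] at hu ⊢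
    obtain ⟨⟨hus, huk⟩, htu⟩ := hu
    exact ⟨sdiff_subset_sdiff hus (le_refl t), by rw [card_sdiff_of_subset htu, huk]⟩
  · intro v hv
    simp only [mem_filter, mem_powersetCard] at hv ⊢
    obtain ⟨hvs, hvk⟩ := hv
    have hdisj : Disjoint v t := disjoint_of_subset_left hvs (sdiff_disjoint)
    refine ⟨⟨union_subset (hvs.trans sdiff_subset) hts, ?_⟩, subset_union_right⟩
    rw [card_union_of_disjoint hdisj, hvk]
    omega
  · intro u hu
    simp only [mem_filter] at hu
    exact sdiff_union_of_subset hu.2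
  · intro v hv
    simp only [mem_powersetCard] at hv
    have hdisj : Disjoint v t := disjoint_of_subset_left hv.1 (sdiff_disjoint)
    exact union_sdiff_cancel_right hdisj

lemma sum_ind_single (n k : ℕ) (hk1 : 1 ≤ k) (hkn : k ≤ n) (i : Fin n) :
    (∑ s ∈ powersetCard k (univ : Finset (Fin n)), (if i ∈ s then (1:ℝ) else 0)) * n
      = k * n.choose k := by
  rw [Finset.sum_boole]
  have h1 : ((powersetCard k (univ : Finset (Fin n))).filter (fun u => i ∈ u)).card
      = (n - 1).choose (k - 1) := by
    have := card_filter_subset_powersetCard (univ : Finset (Fin n)) {i} k (by simp) (by simpa)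
    simpa [Finset.singleton_subset_iff, Finset.card_univ] using this
  have h2 : n * (n - 1).choose (k - 1) = n.choose k * k := by
    have := Nat.add_one_mul_choose_eq (n - 1) (k - 1)
    rw [Nat.sub_add_cancel (hk1.trans hkn), Nat.sub_add_cancel hk1] at this
    exact this
  rw [h1]
  have hnat : (n - 1).choose (k - 1) * n = k * n.choose k := by
    rw [mul_comm, h2, mul_comm]
  exact_mod_cast hnat

lemma sum_ind_pair (n k : ℕ) (hk1 : 1 ≤ k) (hkn : k ≤ n) (i i' : Fin n) (hne : i ≠ i') :
    (∑ s ∈ powersetCard k (univ : Finset (Fin n)),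
        (if i ∈ s then (1:ℝ) else 0) * (if i' ∈ s then 1 else 0)) * (n * (n - 1))
      = k * (k - 1) * n.choose k := by
  have hrw : ∀ s : Finset (Fin n),
      (if i ∈ s then (1:ℝ) else 0) * (if i' ∈ s then 1 else 0)
        = if ({i, i'} : Finset (Fin n)) ⊆ s then 1 else 0 := by
    intro s
    simp only [Finset.insert_subset_iff, Finset.singleton_subset_iff]
    split_ifs with h1 h2 h3 <;> simp_all
  simp_rw [hrw]
  rw [Finset.sum_boole]
  rcases Nat.lt_or_ge k 2 with hk2 | hk2
  · interval_cases k
    have hempty : ((powersetCard 1 (univ : Finset (Fin n))).filter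
        (fun u => ({i, i'} : Finset (Fin n)) ⊆ u)).card = 0 := by
      rw [Finset.card_eq_zero]
      ext u
      simp only [mem_filter, mem_powersetCard, Finset.notMem_empty, iff_false, not_and]
      rintro ⟨-, hu⟩ hsub
      have := Finset.card_le_card hsub
      rw [Finset.card_pair hne, hu] at this
      omega
    rw [hempty]
    push_cast
    ring
  · have hcard2 : ({i, i'} : Finset (Fin n)).card = 2 := Finset.card_pair hne
    have h1 : ((powersetCard k (univ : Finset (Fin n))).filter
        (fun u => ({i, i'} : Finset (Fin n)) ⊆ u)).card = (n - 2).choose (k - 2) := by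
      have := card_filter_subset_powersetCard (univ : Finset (Fin n)) {i, i'} k
        (by simp) (by omega)
      simpa [hcard2, Finset.card_univ] using this
    have hn2 : 2 ≤ n := hk2.trans hkn
    have e1 : (n - 1) * (n - 2).choose (k - 2) = (n - 1).choose (k - 1) * (k - 1) := by
      have := Nat.add_one_mul_choose_eq (n - 2) (k - 2)
      have a1 : n - 2 + 1 = n - 1 := by omega
      have a2 : k - 2 + 1 = k - 1 := by omega
      rw [a1, a2] at this
      exact this
    have e2 : n * (n - 1).choose (k - 1) = n.choose k * k := by
      have := Nat.add_one_mul_choose_eq (n - 1) (k - 1)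
      rw [Nat.sub_add_cancel (by omega : 1 ≤ n), Nat.sub_add_cancel hk1] at this
      exact this
    have key : (n - 2).choose (k - 2) * (n * (n - 1)) = k * (k - 1) * n.choose k := by
      calc (n - 2).choose (k - 2) * (n * (n - 1))
          = n * ((n - 1) * (n - 2).choose (k - 2)) := by ring
        _ = n * ((n - 1).choose (k - 1) * (k - 1)) := by rw [e1]
        _ = (n * (n - 1).choose (k - 1)) * (k - 1) := by ring
        _ = (n.choose k * k) * (k - 1) := by rw [e2]
        _ = k * (k - 1) * n.choose k := by ring
    rw [h1]
    have hcast : ((n:ℝ) - 1) = ((n - 1 : ℕ) : ℝ) := by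
      push_cast [Nat.cast_sub (by omega : 1 ≤ n)]; ring
    have hcastk : ((k:ℝ) - 1) = ((k - 1 : ℕ) : ℝ) := by
      push_cast [Nat.cast_sub hk1]; ring
    rw [hcast, hcastk]
    exact_mod_cast key

lemma quad_sum {n : ℕ} (v1 v2 : ℝ) (g : Fin n → Fin n → ℝ) :
    ∑ i, ∑ i', (if i = i' then v1 else v2) * g i i'
      = (v1 - v2) * ∑ i, g i i + v2 * ∑ i, ∑ i', g i i' := by
  have h : ∀ i i' : Fin n, (if i = i' then v1 else v2) * g i i'
      = (if i = i' then (v1 - v2) * g i i' else 0) + v2 * g i i' := by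
    intro i i'; split_ifs <;> ring
  simp_rw [h, Finset.sum_add_distrib, Finset.sum_ite_eq, Finset.mem_univ, if_true,
    ← Finset.mul_sum]

lemma sep1 {α β γ : Type*} [Fintype γ] (A : Finset α) (B : Finset β)
    (a : γ → α → ℝ) (b : γ → β → ℝ) (c : γ → ℝ) :
    ∑ s ∈ A, ∑ u ∈ B, ∑ i : γ, a i s * b i u * c i
      = ∑ i : γ, (∑ s ∈ A, a i s) * (∑ u ∈ B, b i u) * c i := by
  calc ∑ s ∈ A, ∑ u ∈ B, ∑ i : γ, a i s * b i u * c i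
      = ∑ s ∈ A, ∑ i : γ, ∑ u ∈ B, a i s * b i u * c i :=
        Finset.sum_congr rfl fun s _ => Finset.sum_comm
    _ = ∑ i : γ, ∑ s ∈ A, ∑ u ∈ B, a i s * b i u * c i := Finset.sum_comm
    _ = ∑ i : γ, (∑ s ∈ A, a i s) * (∑ u ∈ B, b i u) * c i := by
        refine Finset.sum_congr rfl fun i _ => ?_
        rw [Finset.sum_mul, Finset.sum_mul]
        refine Finset.sum_congr rfl fun s _ => ?_
        rw [Finset.mul_sum, Finset.sum_mul]

lemma sum_center {γ : Type*} [Fintype γ] (f : γ → ℝ) (c : ℝ)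
    (h : ∑ x, f x = (Fintype.card γ : ℝ) * c) :
    ∑ x, (f x - c)^2 = ∑ x, (f x)^2 - (Fintype.card γ : ℝ) * c^2 := by
  have e : ∀ x, (f x - c)^2 = (f x)^2 - 2*c*(f x) + c^2 := fun x => by ring
  simp_rw [e]
  rw [Finset.sum_add_distrib, Finset.sum_sub_distrib, ← Finset.mul_sum, h, Finset.sum_const,
    Finset.card_univ, nsmul_eq_mul]
  ring

lemma quad_sum_pair {n m : ℕ} (v1 v2 w1 w2 : ℝ) (Y : Fin n → Fin m → ℝ) :
    ∑ q : (Fin n × Fin m) × (Fin n × Fin m),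
        (if q.1.1 = q.2.1 then v1 else v2) * (if q.1.2 = q.2.2 then w1 else w2) *
          (Y q.1.1 q.1.2 * Y q.2.1 q.2.2)
      = (v1 - v2) * (w1 - w2) * (∑ i, ∑ j, (Y i j)^2)
        + (v1 - v2) * w2 * (∑ i, (∑ j, Y i j)^2)
        + v2 * (w1 - w2) * (∑ j, (∑ i, Y i j)^2)
        + v2 * w2 * (∑ i, ∑ j, Y i j)^2 := by
  have step1 : ∑ q : (Fin n × Fin m) × (Fin n × Fin m),
      (if q.1.1 = q.2.1 then v1 else v2) * (if q.1.2 = q.2.2 then w1 else w2) *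
        (Y q.1.1 q.1.2 * Y q.2.1 q.2.2)
      = ∑ i, ∑ j, ∑ i', ∑ j',
        (if i = i' then v1 else v2) * (if j = j' then w1 else w2) * (Y i j * Y i' j') := by
    simp only [Fintype.sum_prod_type]
  rw [step1]
  have step2 : (∑ i, ∑ j, ∑ i', ∑ j',
        (if i = i' then v1 else v2) * (if j = j' then w1 else w2) * (Y i j * Y i' j'))
      = ∑ i, ∑ i', ∑ j, ∑ j',
        (if i = i' then v1 else v2) * (if j = j' then w1 else w2) * (Y i j * Y i' j') :=
    Finset.sum_congr rfl fun i _ => Finset.sum_comm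
  rw [step2]
  have step3 : ∀ i i' : Fin n, (∑ j, ∑ j',
      (if i = i' then v1 else v2) * (if j = j' then w1 else w2) * (Y i j * Y i' j'))
      = (if i = i' then v1 else v2) *
        ((w1 - w2) * (∑ j, Y i j * Y i' j) + w2 * ((∑ j, Y i j) * (∑ j', Y i' j'))) := by
    intro i i'
    simp_rw [mul_assoc, ← Finset.mul_sum]
    rw [quad_sum w1 w2 (fun j j' => Y i j * Y i' j'), ← Finset.sum_mul_sum]
  simp_rw [step3]
  rw [quad_sum v1 v2 (fun i i' =>
    (w1 - w2) * (∑ j, Y i j * Y i' j) + w2 * ((∑ j, Y i j) * (∑ j', Y i' j')))]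
  have d1 : ∑ i, ((w1 - w2) * (∑ j, Y i j * Y i j) + w2 * ((∑ j, Y i j) * (∑ j', Y i j')))
      = (w1 - w2) * (∑ i, ∑ j, (Y i j)^2) + w2 * (∑ i, (∑ j, Y i j)^2) := by
    rw [Finset.sum_add_distrib, ← Finset.mul_sum, ← Finset.mul_sum]
    congr 2
    · exact Finset.sum_congr rfl fun i _ => Finset.sum_congr rfl fun j _ => (sq _).symm
    · exact Finset.sum_congr rfl fun i _ => (sq _).symm
  have d2 : ∑ i, ∑ i', ((w1 - w2) * (∑ j, Y i j * Y i' j) + w2 * ((∑ j, Y i j) * (∑ j', Y i' j')))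
      = (w1 - w2) * (∑ j, (∑ i, Y i j)^2) + w2 * (∑ i, ∑ j, Y i j)^2 := by
    simp_rw [Finset.sum_add_distrib, ← Finset.mul_sum]
    congr 1
    · congr 1
      calc ∑ i, ∑ i', ∑ j, Y i j * Y i' j
          = ∑ i, ∑ j, ∑ i', Y i j * Y i' j :=
            Finset.sum_congr rfl fun i _ => Finset.sum_comm
        _ = ∑ j, ∑ i, ∑ i', Y i j * Y i' j := Finset.sum_comm
        _ = ∑ j, (∑ i, Y i j)^2 := by
            refine Finset.sum_congr rfl fun j _ => ?_
            rw [sq, Finset.sum_mul_sum]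
    · congr 1
      rw [← Finset.sum_mul, ← sq]
  rw [d1, d2]
  ring

set_option maxHeartbeats 2000000 in
/-- exact variance of the treated-type sample average in a SMRD:
`Var(Ȳ̄_t) = (I_C/(I_T I)) S²_t(B) + (J_C/(J_T J)) S²_t(S) + (I_C/(I_T I))(J_C/(J_T J)) S²_t(BS)`. -/
theorem treated_sample_average_variance (I J IT JT : ℕ)
    (hI : 2 ≤ I) (hJ : 2 ≤ J)
    (hIT1 : 1 ≤ IT) (hIT2 : IT ≤ I - 1) (hJT1 : 1 ≤ JT) (hJT2 : JT ≤ J - 1)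
    (Y : Fin I → Fin J → ℝ) :
    let Ybar : ℝ := (∑ i, ∑ j, Y i j) / ((I : ℝ) * J)
    let YB : Fin I → ℝ := fun i => (∑ j, Y i j) / (J : ℝ)
    let YS : Fin J → ℝ := fun j => (∑ i, Y i j) / (I : ℝ)
    let S2B : ℝ := (1 / ((I : ℝ) - 1)) * ∑ i, (YB i - Ybar) ^ 2
    let S2S : ℝ := (1 / ((J : ℝ) - 1)) * ∑ j, (YS j - Ybar) ^ 2
    let S2BS : ℝ := (1 / (((I : ℝ) - 1) * ((J : ℝ) - 1))) *
        ∑ i, ∑ j, (Y i j - YB i - YS j + Ybar) ^ 2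
    srsVar2 I J IT JT (fun s u =>
        (∑ i, ∑ j, (if i ∈ s then (1 : ℝ) else 0) * (if j ∈ u then (1 : ℝ) else 0) * Y i j)
          / ((IT : ℝ) * JT))
      = (((I - IT : ℕ) : ℝ) / ((IT : ℝ) * I)) * S2B
        + (((J - JT : ℕ) : ℝ) / ((JT : ℝ) * J)) * S2S
        + (((I - IT : ℕ) : ℝ) / ((IT : ℝ) * I)) * (((J - JT : ℕ) : ℝ) / ((JT : ℝ) * J)) * S2BS := by
  intro Ybar YB YS S2B S2S S2BS
  have hITI : IT ≤ I := by omega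
  have hJTJ : JT ≤ J := by omega
  have hI0 : (I : ℝ) ≠ 0 := Nat.cast_ne_zero.mpr (by omega)
  have hJ0 : (J : ℝ) ≠ 0 := Nat.cast_ne_zero.mpr (by omega)
  have hIT0 : (IT : ℝ) ≠ 0 := Nat.cast_ne_zero.mpr (by omega)
  have hJT0 : (JT : ℝ) ≠ 0 := Nat.cast_ne_zero.mpr (by omega)
  have hI1 : (I : ℝ) - 1 ≠ 0 := by
    have : (2 : ℝ) ≤ (I : ℝ) := by exact_mod_cast hI
    linarith
  have hJ1 : (J : ℝ) - 1 ≠ 0 := by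
    have : (2 : ℝ) ≤ (J : ℝ) := by exact_mod_cast hJ
    linarith
  have hP0 : ((I.choose IT : ℕ) : ℝ) ≠ 0 := Nat.cast_ne_zero.mpr (Nat.choose_pos hITI).ne'
  have hQ0 : ((J.choose JT : ℕ) : ℝ) ≠ 0 := Nat.cast_ne_zero.mpr (Nat.choose_pos hJTJ).ne'
  -- indicator sums
  have he1 : ∀ i : Fin I,
      (∑ s ∈ Finset.powersetCard IT (Finset.univ : Finset (Fin I)),
        (if i ∈ s then (1:ℝ) else 0)) = (IT : ℝ) * (I.choose IT : ℝ) / (I : ℝ) := by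
    intro i
    rw [eq_div_iff hI0]
    exact sum_ind_single I IT hIT1 hITI i
  have hf1 : ∀ j : Fin J,
      (∑ u ∈ Finset.powersetCard JT (Finset.univ : Finset (Fin J)),
        (if j ∈ u then (1:ℝ) else 0)) = (JT : ℝ) * (J.choose JT : ℝ) / (J : ℝ) := by
    intro j
    rw [eq_div_iff hJ0]
    exact sum_ind_single J JT hJT1 hJTJ j
  have he : ∀ i i' : Fin I,
      (∑ s ∈ Finset.powersetCard IT (Finset.univ : Finset (Fin I)),
        (if i ∈ s then (1:ℝ) else 0) * (if i' ∈ s then (1:ℝ) else 0))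
      = if i = i' then (IT : ℝ) * (I.choose IT : ℝ) / (I : ℝ)
        else (IT : ℝ) * ((IT : ℝ) - 1) * (I.choose IT : ℝ) / ((I : ℝ) * ((I : ℝ) - 1)) := by
    intro i i'
    by_cases hii : i = i'
    · subst hii
      rw [if_pos rfl]
      have hind : ∀ s : Finset (Fin I),
          (if i ∈ s then (1:ℝ) else 0) * (if i ∈ s then (1:ℝ) else 0)
            = (if i ∈ s then (1:ℝ) else 0) := fun s => by split_ifs <;> ring
      simp_rw [hind]
      exact he1 i
    · rw [if_neg hii, eq_div_iff (mul_ne_zero hI0 hI1)]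
      exact sum_ind_pair I IT hIT1 hITI i i' hii
  have hf : ∀ j j' : Fin J,
      (∑ u ∈ Finset.powersetCard JT (Finset.univ : Finset (Fin J)),
        (if j ∈ u then (1:ℝ) else 0) * (if j' ∈ u then (1:ℝ) else 0))
      = if j = j' then (JT : ℝ) * (J.choose JT : ℝ) / (J : ℝ)
        else (JT : ℝ) * ((JT : ℝ) - 1) * (J.choose JT : ℝ) / ((J : ℝ) * ((J : ℝ) - 1)) := by
    intro j j'
    by_cases hjj : j = j'
    · subst hjj
      rw [if_pos rfl]
      have hind : ∀ u : Finset (Fin J),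
          (if j ∈ u then (1:ℝ) else 0) * (if j ∈ u then (1:ℝ) else 0)
            = (if j ∈ u then (1:ℝ) else 0) := fun u => by split_ifs <;> ring
      simp_rw [hind]
      exact hf1 j
    · rw [if_neg hjj, eq_div_iff (mul_ne_zero hJ0 hJ1)]
      exact sum_ind_pair J JT hJT1 hJTJ j j' hjj
  -- flatten double sums over (i, j) into a product type
  have hflat : ∀ (s : Finset (Fin I)) (u : Finset (Fin J)),
      (∑ i, ∑ j, (if i ∈ s then (1:ℝ) else 0) * (if j ∈ u then (1:ℝ) else 0) * Y i j)
        = ∑ p : Fin I × Fin J,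
            (if p.1 ∈ s then (1:ℝ) else 0) * (if p.2 ∈ u then (1:ℝ) else 0) * Y p.1 p.2 := by
    intro s u
    rw [Fintype.sum_prod_type]
  -- first moment
  have key1 : (∑ s ∈ Finset.powersetCard IT (Finset.univ : Finset (Fin I)),
      ∑ u ∈ Finset.powersetCard JT (Finset.univ : Finset (Fin J)),
        ∑ i, ∑ j, (if i ∈ s then (1:ℝ) else 0) * (if j ∈ u then (1:ℝ) else 0) * Y i j)
      = ((IT : ℝ) * (I.choose IT : ℝ) / (I : ℝ)) * ((JT : ℝ) * (J.choose JT : ℝ) / (J : ℝ))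
        * (∑ i, ∑ j, Y i j) := by
    simp_rw [hflat]
    rw [sep1 (Finset.powersetCard IT (Finset.univ : Finset (Fin I)))
      (Finset.powersetCard JT (Finset.univ : Finset (Fin J)))
      (fun (p : Fin I × Fin J) s => if p.1 ∈ s then (1:ℝ) else 0)
      (fun (p : Fin I × Fin J) u => if p.2 ∈ u then (1:ℝ) else 0)
      (fun (p : Fin I × Fin J) => Y p.1 p.2)]
    simp_rw [he1, hf1]
    rw [← Finset.mul_sum, Fintype.sum_prod_type]
  -- second moment
  have hsq : ∀ (s : Finset (Fin I)) (u : Finset (Fin J)),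
      (∑ p : Fin I × Fin J,
        (if p.1 ∈ s then (1:ℝ) else 0) * (if p.2 ∈ u then (1:ℝ) else 0) * Y p.1 p.2) ^ 2
      = ∑ q : (Fin I × Fin J) × (Fin I × Fin J),
          ((if q.1.1 ∈ s then (1:ℝ) else 0) * (if q.2.1 ∈ s then (1:ℝ) else 0)) *
          ((if q.1.2 ∈ u then (1:ℝ) else 0) * (if q.2.2 ∈ u then (1:ℝ) else 0)) *
          (Y q.1.1 q.1.2 * Y q.2.1 q.2.2) := by
    intro s u
    rw [sq, Finset.sum_mul_sum]
    conv_rhs => rw [Fintype.sum_prod_type]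
    refine Finset.sum_congr rfl fun p _ => Finset.sum_congr rfl fun p' _ => by ring
  have key2 : (∑ s ∈ Finset.powersetCard IT (Finset.univ : Finset (Fin I)),
      ∑ u ∈ Finset.powersetCard JT (Finset.univ : Finset (Fin J)),
        (∑ i, ∑ j, (if i ∈ s then (1:ℝ) else 0) * (if j ∈ u then (1:ℝ) else 0) * Y i j) ^ 2)
      = (((IT : ℝ) * (I.choose IT : ℝ) / (I : ℝ))
          - ((IT : ℝ) * ((IT : ℝ) - 1) * (I.choose IT : ℝ) / ((I : ℝ) * ((I : ℝ) - 1))))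
        * (((JT : ℝ) * (J.choose JT : ℝ) / (J : ℝ))
          - ((JT : ℝ) * ((JT : ℝ) - 1) * (J.choose JT : ℝ) / ((J : ℝ) * ((J : ℝ) - 1))))
        * (∑ i, ∑ j, (Y i j)^2)
        + (((IT : ℝ) * (I.choose IT : ℝ) / (I : ℝ))
          - ((IT : ℝ) * ((IT : ℝ) - 1) * (I.choose IT : ℝ) / ((I : ℝ) * ((I : ℝ) - 1))))
          * ((JT : ℝ) * ((JT : ℝ) - 1) * (J.choose JT : ℝ) / ((J : ℝ) * ((J : ℝ) - 1)))
          * (∑ i, (∑ j, Y i j)^2)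
        + ((IT : ℝ) * ((IT : ℝ) - 1) * (I.choose IT : ℝ) / ((I : ℝ) * ((I : ℝ) - 1)))
          * (((JT : ℝ) * (J.choose JT : ℝ) / (J : ℝ))
            - ((JT : ℝ) * ((JT : ℝ) - 1) * (J.choose JT : ℝ) / ((J : ℝ) * ((J : ℝ) - 1))))
          * (∑ j, (∑ i, Y i j)^2)
        + ((IT : ℝ) * ((IT : ℝ) - 1) * (I.choose IT : ℝ) / ((I : ℝ) * ((I : ℝ) - 1)))
          * ((JT : ℝ) * ((JT : ℝ) - 1) * (J.choose JT : ℝ) / ((J : ℝ) * ((J : ℝ) - 1)))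
          * (∑ i, ∑ j, Y i j) ^ 2 := by
    simp_rw [hflat, hsq]
    rw [sep1 (Finset.powersetCard IT (Finset.univ : Finset (Fin I)))
      (Finset.powersetCard JT (Finset.univ : Finset (Fin J)))
      (fun (q : (Fin I × Fin J) × (Fin I × Fin J)) s =>
        (if q.1.1 ∈ s then (1:ℝ) else 0) * (if q.2.1 ∈ s then (1:ℝ) else 0))
      (fun (q : (Fin I × Fin J) × (Fin I × Fin J)) u =>
        (if q.1.2 ∈ u then (1:ℝ) else 0) * (if q.2.2 ∈ u then (1:ℝ) else 0))
      (fun (q : (Fin I × Fin J) × (Fin I × Fin J)) => Y q.1.1 q.1.2 * Y q.2.1 q.2.2)]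
    simp_rw [he, hf]
    exact quad_sum_pair _ _ _ _ Y
  -- structural identities relating sums to the let-definitions
  have hYB : ∀ i, (∑ j, Y i j) = (J : ℝ) * YB i := by
    intro i
    show (∑ j, Y i j) = (J : ℝ) * ((∑ j, Y i j) / (J : ℝ))
    field_simp
  have hYS : ∀ j, (∑ i, Y i j) = (I : ℝ) * YS j := by
    intro j
    show (∑ i, Y i j) = (I : ℝ) * ((∑ i, Y i j) / (I : ℝ))
    field_simp
  have hT : (∑ i, ∑ j, Y i j) = (I : ℝ) * (J : ℝ) * Ybar := by
    show (∑ i, ∑ j, Y i j) = (I : ℝ) * (J : ℝ) * ((∑ i, ∑ j, Y i j) / ((I : ℝ) * (J : ℝ)))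
    field_simp
  have hSA : (∑ i, (∑ j, Y i j)^2) = (J : ℝ)^2 * (∑ i, (YB i)^2) := by
    simp_rw [hYB, mul_pow, ← Finset.mul_sum]
  have hSB : (∑ j, (∑ i, Y i j)^2) = (I : ℝ)^2 * (∑ j, (YS j)^2) := by
    simp_rw [hYS, mul_pow, ← Finset.mul_sum]
  have hsumYB : (∑ i, YB i) = (I : ℝ) * Ybar := by
    show (∑ i, (∑ j, Y i j) / (J : ℝ)) = (I : ℝ) * ((∑ i, ∑ j, Y i j) / ((I : ℝ) * (J : ℝ)))
    rw [← Finset.sum_div]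
    field_simp
  have hsumYS : (∑ j, YS j) = (J : ℝ) * Ybar := by
    show (∑ j, (∑ i, Y i j) / (I : ℝ)) = (J : ℝ) * ((∑ i, ∑ j, Y i j) / ((I : ℝ) * (J : ℝ)))
    rw [← Finset.sum_div, Finset.sum_comm]
    field_simp
  -- centered sums
  have hS2Bsum : (∑ i, (YB i - Ybar)^2) = (∑ i, (YB i)^2) - (I : ℝ) * Ybar^2 := by
    have h : ∑ i, YB i = ((Fintype.card (Fin I)) : ℝ) * Ybar := by
      rw [Fintype.card_fin]; exact hsumYB
    have := sum_center YB Ybar h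
    rwa [Fintype.card_fin] at this
  have hS2Ssum : (∑ j, (YS j - Ybar)^2) = (∑ j, (YS j)^2) - (J : ℝ) * Ybar^2 := by
    have h : ∑ j, YS j = ((Fintype.card (Fin J)) : ℝ) * Ybar := by
      rw [Fintype.card_fin]; exact hsumYS
    have := sum_center YS Ybar h
    rwa [Fintype.card_fin] at this
  have hS2BSsum : (∑ i, ∑ j, (Y i j - YB i - YS j + Ybar)^2)
      = (∑ i, ∑ j, (Y i j)^2) - (I : ℝ) * (∑ j, (YS j)^2)
        - (J : ℝ) * (∑ i, (YB i)^2) + (I : ℝ) * (J : ℝ) * Ybar^2 := by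
    have inner : ∀ i, (∑ j, (Y i j - YB i - YS j + Ybar)^2)
        = (∑ j, (Y i j - YS j)^2) - (J : ℝ) * (YB i - Ybar)^2 := by
      intro i
      have hstep : ∀ j, (Y i j - YB i - YS j + Ybar)^2 = ((Y i j - YS j) - (YB i - Ybar))^2 :=
        fun j => by ring
      simp_rw [hstep]
      have h : ∑ j, (Y i j - YS j) = ((Fintype.card (Fin J)) : ℝ) * (YB i - Ybar) := by
        rw [Fintype.card_fin, Finset.sum_sub_distrib, hsumYS, hYB i]
        ring
      have := sum_center (fun j => Y i j - YS j) (YB i - Ybar) h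
      rwa [Fintype.card_fin] at this
    simp_rw [inner]
    rw [Finset.sum_sub_distrib, ← Finset.mul_sum, hS2Bsum]
    have hpart : (∑ i, ∑ j, (Y i j - YS j)^2)
        = (∑ i, ∑ j, (Y i j)^2) - (I : ℝ) * (∑ j, (YS j)^2) := by
      rw [Finset.sum_comm]
      have hj : ∀ j, (∑ i, (Y i j - YS j)^2) = (∑ i, (Y i j)^2) - (I : ℝ) * (YS j)^2 := by
        intro j
        have h : ∑ i, Y i j = ((Fintype.card (Fin I)) : ℝ) * YS j := by
          rw [Fintype.card_fin]; exact hYS j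
        have := sum_center (fun i => Y i j) (YS j) h
        rwa [Fintype.card_fin] at this
      simp_rw [hj]
      rw [Finset.sum_sub_distrib, ← Finset.mul_sum]
      congr 1
      exact Finset.sum_comm
    rw [hpart]
    ring
  -- rewrite the S² quantities
  have hS2B : S2B = (1 / ((I : ℝ) - 1)) * ((∑ i, (YB i)^2) - (I : ℝ) * Ybar^2) := by
    show (1 / ((I : ℝ) - 1)) * (∑ i, (YB i - Ybar)^2) = _
    rw [hS2Bsum]
  have hS2S : S2S = (1 / ((J : ℝ) - 1)) * ((∑ j, (YS j)^2) - (J : ℝ) * Ybar^2) := by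
    show (1 / ((J : ℝ) - 1)) * (∑ j, (YS j - Ybar)^2) = _
    rw [hS2Ssum]
  have hS2BS : S2BS = (1 / (((I : ℝ) - 1) * ((J : ℝ) - 1))) *
      ((∑ i, ∑ j, (Y i j)^2) - (I : ℝ) * (∑ j, (YS j)^2)
        - (J : ℝ) * (∑ i, (YB i)^2) + (I : ℝ) * (J : ℝ) * Ybar^2) := by
    show (1 / (((I : ℝ) - 1) * ((J : ℝ) - 1))) * (∑ i, ∑ j, (Y i j - YB i - YS j + Ybar)^2) = _
    rw [hS2BSsum]
  -- final assembly
  rw [hS2B, hS2S, hS2BS]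
  simp only [srsVar2, srsExp2]
  simp only [div_pow, ← Finset.sum_div]
  rw [key1, key2]
  rw [Finset.card_powersetCard, Finset.card_powersetCard, Finset.card_univ, Finset.card_univ,
    Fintype.card_fin, Fintype.card_fin]
  rw [hSA, hSB, hT]
  rw [Nat.cast_sub hITI, Nat.cast_sub hJTJ]
  field_simp
  ring
end
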